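/- arXiv:2106.12725 — 3 statements merged into one kernel-verified Lean document; each statement's English description precedes it below -/
import Mathlib

section
/- Let j ∈ R and p = per(T[j..j+3τ−1)). Then: (1) if j+1 ∈ R, then per(T[j+1..j+3τ)) = p; and (2) rend(j) = j + p + LCE(j, j+p). -/
open scoped Classical

namespace CSA

/-- Character of a 1-indexed string at position `i` (junk value 0 out of range). -/
def idx (S : List ℕ) (i : ℕ) : ℕ := S.getD (i - 1) 0

/-- Substring `S[i..j)` in the 1-indexed, half-open convention. -/
def sub (S : List ℕ) (i j : ℕ) : List ℕ := (S.drop (i - 1)).take (j - i)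

/-- Suffix `S[i..|S|]` (1-indexed). -/
def suf (S : List ℕ) (i : ℕ) : List ℕ := S.drop (i - 1)

/-- Length of the longest common prefix of two strings. -/
def lcp (A B : List ℕ) : ℕ := ((A.zip B).takeWhile fun p => p.1 == p.2).length

/-- `LCE T j₁ j₂` is the length of the longest common prefix of `T[j₁..n]` and `T[j₂..n]`. -/
def LCE (T : List ℕ) (j₁ j₂ : ℕ) : ℕ := lcp (suf T j₁) (suf T j₂)

/-- `p` is a period of `S`. -/
def IsPeriod (S : List ℕ) (p : ℕ) : Prop :=
  1 ≤ p ∧ p ≤ S.length ∧ ∀ i, i + p < S.length → S.getD i 0 = S.getD (i + p) 0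

/-- The shortest period of `S`. -/
noncomputable def per (S : List ℕ) : ℕ := sInf {p | IsPeriod S p}

/-- `R = {i ∈ [1..n−3τ+2] : per(T[i..i+3τ−1)) ≤ τ/3}`. -/
noncomputable def R (T : List ℕ) (τ : ℕ) : Set ℕ :=
  {i | 1 ≤ i ∧ i + 3 * τ ≤ T.length + 2 ∧ 3 * per (sub T i (i + 3 * τ - 1)) ≤ τ}

/-- `rend(j) = min{j′ ≥ j : j′ ∉ R} + 3τ − 2`. -/
noncomputable def rend (T : List ℕ) (τ j : ℕ) : ℕ :=
  sInf {j' | j ≤ j' ∧ j' ∉ R T τ} + 3 * τ - 2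

/-- `L-root(j)`: lexicographically smallest among `{T[j+t..j+t+p) : 0 ≤ t < p}`
where `p = per(T[j..j+3τ−1))`. -/
noncomputable def Lroot (T : List ℕ) (τ j : ℕ) : List ℕ :=
  WithTop.untopD [] (((Finset.range (per (sub T j (j + 3 * τ - 1)))).image fun t =>
      sub T (j + t) (j + t + per (sub T j (j + 3 * τ - 1)))).min)

/-- `L-head(j)`: the (unique) `s ∈ [0..p)` with `T[j+s..j+s+p) = L-root(j)`. -/
noncomputable def Lhead (T : List ℕ) (τ j : ℕ) : ℕ :=
  sInf {s | s < per (sub T j (j + 3 * τ - 1)) ∧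
    sub T (j + s) (j + s + per (sub T j (j + 3 * τ - 1))) = Lroot T τ j}

noncomputable def Lexp (T : List ℕ) (τ j : ℕ) : ℕ :=
  (rend T τ j - j - Lhead T τ j) / per (sub T j (j + 3 * τ - 1))

noncomputable def Ltail (T : List ℕ) (τ j : ℕ) : ℕ :=
  (rend T τ j - j - Lhead T τ j) % per (sub T j (j + 3 * τ - 1))

noncomputable def rendfull (T : List ℕ) (τ j : ℕ) : ℕ := rend T τ j - Ltail T τ j

/-- `type(j) = +1` if `rend(j) ≤ n` and `T[rend(j)] > T[rend(j)−p]`, and `−1` otherwise. -/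
noncomputable def typ (T : List ℕ) (τ j : ℕ) : ℤ :=
  if rend T τ j ≤ T.length ∧
      idx T (rend T τ j - per (sub T j (j + 3 * τ - 1))) < idx T (rend T τ j)
    then 1 else -1

noncomputable def Rminus (T : List ℕ) (τ : ℕ) : Set ℕ := {j ∈ R T τ | typ T τ j = -1}

noncomputable def RH (T : List ℕ) (τ : ℕ) (H : List ℕ) : Set ℕ :=
  {j ∈ R T τ | Lroot T τ j = H}

noncomputable def RsH (T : List ℕ) (τ s : ℕ) (H : List ℕ) : Set ℕ :=
  {j ∈ R T τ | Lroot T τ j = H ∧ Lhead T τ j = s}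

noncomputable def RminusH (T : List ℕ) (τ : ℕ) (H : List ℕ) : Set ℕ :=
  Rminus T τ ∩ RH T τ H

noncomputable def RminusSH (T : List ℕ) (τ s : ℕ) (H : List ℕ) : Set ℕ :=
  Rminus T τ ∩ RsH T τ s H

noncomputable def Rprime (T : List ℕ) (τ : ℕ) : Set ℕ := {j ∈ R T τ | j - 1 ∉ R T τ}

/-- `Occ(P,S)`: the set of (1-indexed) starting positions of occurrences of `P` in `S`. -/
def OccSet (P S : List ℕ) : Set ℕ :=
  {j | 1 ≤ j ∧ j + P.length ≤ S.length + 1 ∧ sub S j (j + P.length) = P}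

noncomputable def RangeBeg (P T : List ℕ) : ℕ :=
  Set.ncard {i | 1 ≤ i ∧ i ≤ T.length ∧ suf T i < P}

noncomputable def RangeEnd (P T : List ℕ) : ℕ := RangeBeg P T + (OccSet P T).ncard

/-- `ISA[j]`: the lexicographic rank of the suffix `T[j..n]` among all suffixes of `T`. -/
noncomputable def ISA (T : List ℕ) (j : ℕ) : ℕ :=
  Set.ncard {j' | 1 ≤ j' ∧ j' ≤ T.length ∧ suf T j' ≤ suf T j}

/-- `succ_S(i) = min{j ∈ S ∪ {n−2τ+2} : j ≥ i}`. -/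
noncomputable def succS (T : List ℕ) (τ : ℕ) (Sync : Set ℕ) (i : ℕ) : ℕ :=
  sInf {j | i ≤ j ∧ (j ∈ Sync ∨ j = T.length + 2 - 2 * τ)}

/-- The set `D` of distinguishing prefixes. -/
noncomputable def Dset (T : List ℕ) (τ : ℕ) (Sync : Set ℕ) : Set (List ℕ) :=
  {X | ∃ i, 1 ≤ i ∧ i + 3 * τ ≤ T.length + 2 ∧ i ∉ R T τ ∧
    X = sub T i (succS T τ Sync i + 2 * τ)}

/-- `T^∞[i] = T[1 + ((i−1) mod n)]` for `i : ℤ`. -/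
def tinf (T : List ℕ) (i : ℤ) : ℕ := idx T (((i - 1).emod (T.length : ℤ)).toNat + 1)

/-- `W[i]`: the reverse of `T^∞[s^lex_i − τ .. s^lex_i + 2τ)`. -/
def Wstr (T : List ℕ) (τ : ℕ) (slex : ℕ → ℕ) (i : ℕ) : List ℕ :=
  ((List.range (3 * τ)).map fun k => tinf T ((slex i : ℤ) - (τ : ℤ) + (k : ℤ))).reverse

/- Pattern versions of the `L`-decomposition functions. -/

noncomputable def perP (τ : ℕ) (P : List ℕ) : ℕ := per (P.take (3 * τ - 1))

/-- A pattern is periodic if `|P| ≥ 3τ−1` and `per(P[1..3τ−1]) ≤ τ/3`. -/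
noncomputable def Periodic (τ : ℕ) (P : List ℕ) : Prop :=
  3 * τ - 1 ≤ P.length ∧ 3 * perP τ P ≤ τ

noncomputable def pend (τ : ℕ) (P : List ℕ) : ℕ :=
  1 + perP τ P + lcp P (P.drop (perP τ P))

noncomputable def LrootP (τ : ℕ) (P : List ℕ) : List ℕ :=
  WithTop.untopD [] (((Finset.range (perP τ P)).image fun t => (P.drop t).take (perP τ P)).min)

noncomputable def LheadP (τ : ℕ) (P : List ℕ) : ℕ :=
  sInf {s | s < perP τ P ∧ (P.drop s).take (perP τ P) = LrootP τ P}

noncomputable def LexpP (τ : ℕ) (P : List ℕ) : ℕ :=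
  (pend τ P - 1 - LheadP τ P) / perP τ P

noncomputable def LtailP (τ : ℕ) (P : List ℕ) : ℕ :=
  (pend τ P - 1 - LheadP τ P) % perP τ P

noncomputable def pendfullP (τ : ℕ) (P : List ℕ) : ℕ := pend τ P - LtailP τ P

noncomputable def typP (τ : ℕ) (P : List ℕ) : ℤ :=
  if pend τ P ≤ P.length ∧ idx P (pend τ P - perP τ P) < idx P (pend τ P)
    then 1 else -1

/-- `pow(H)`: the prefix of length `|H|·⌈τ/|H|⌉` of `H^∞`. -/
def powS (τ : ℕ) (H : List ℕ) : List ℕ :=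
  (List.replicate ((τ + H.length - 1) / H.length) H).flatten

/-! Two periods `p`, `q` of a window of length at least `p + q` make `gcd p q` a period
(Fine–Wilf), so positions `a`, `b` with `a + p = b + q` carry the same letter. Hence if a
`p`-periodic window overlaps a `q`-periodic window in at least `p + q` positions, the period `p`
extends by one position into the other window. Applied to the windows at `j` and `j + 1` this
gives equality of their periods. For `ℓ = LCE(j, j + p)` the string is `p`-periodic on
`[j, j + p + ℓ)` and breaks at position `j + p + ℓ`, which lies inside `T` because the final `0`
is unique. Every window inside the run is in `R`, and the first window reaching the break is not,
as its period would extend the run; so the run ends exactly at `rend(j) = j + p + ℓ`. -/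

lemma suf_length (T : List ℕ) (i : ℕ) : (suf T i).length = T.length - (i - 1) := by
  simp [suf]

lemma suf_getD (T : List ℕ) {i : ℕ} (hi : 1 ≤ i) (t : ℕ) :
    (suf T i).getD t 0 = idx T (i + t) := by
  simp only [suf, idx, List.getD_eq_getElem?_getD, List.getElem?_drop]
  congr 2
  omega

lemma sub_length (T : List ℕ) {i k : ℕ} (hi : 1 ≤ i) (hk : k ≤ T.length + 1) :
    (sub T i k).length = k - i := by
  simp only [sub, List.length_take, List.length_drop]
  omega

lemma sub_getD (T : List ℕ) {i k t : ℕ} (hi : 1 ≤ i) (ht : t < k - i) :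
    (sub T i k).getD t 0 = idx T (i + t) := by
  simp only [sub, idx, List.getD_eq_getElem?_getD, List.getElem?_take, ht, if_true,
    List.getElem?_drop]
  congr 2
  omega

/-- Unlike `IsPeriod (sub T i k) q`, this uses absolute positions of `T`, so that periods of
overlapping windows can be compared without reindexing. -/
structure IsPeriodOn (T : List ℕ) (i k q : ℕ) : Prop where
  one_le : 1 ≤ q
  le_length : q ≤ k - i
  idx_eq : ∀ t, i ≤ t → t + q < k → idx T t = idx T (t + q)

section Periods

variable {T : List ℕ} {i k p q : ℕ}

lemma isPeriod_sub_iff (hi : 1 ≤ i) (hk : k ≤ T.length + 1) :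
    IsPeriod (sub T i k) q ↔ IsPeriodOn T i k q := by
  unfold IsPeriod
  rw [sub_length T hi hk]
  constructor
  · rintro ⟨h1, h2, h3⟩
    refine ⟨h1, h2, fun t ht htk => ?_⟩
    have h := h3 (t - i) (by omega)
    rwa [sub_getD T hi (by omega), sub_getD T hi (by omega),
      show i + (t - i) = t by omega, show i + (t - i + q) = t + q by omega] at h
  · rintro ⟨h1, h2, h3⟩
    refine ⟨h1, h2, fun u hu => ?_⟩
    have h := h3 (i + u) (by omega) (by omega)
    rwa [sub_getD T hi (by omega), sub_getD T hi (by omega),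
      show i + (u + q) = i + u + q by omega]

lemma isPeriodOn_per_sub (hi : 1 ≤ i) (hk : k ≤ T.length + 1) (hik : i < k) :
    IsPeriodOn T i k (per (sub T i k)) := by
  rw [← isPeriod_sub_iff hi hk]
  have hlen : IsPeriod (sub T i k) (k - i) :=
    (isPeriod_sub_iff hi hk).2 ⟨by omega, le_rfl, fun t ht htk => by omega⟩
  exact Nat.sInf_mem (s := {p | IsPeriod (sub T i k) p}) ⟨k - i, hlen⟩

lemma per_sub_le (hi : 1 ≤ i) (hk : k ≤ T.length + 1) (h : IsPeriodOn T i k q) :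
    per (sub T i k) ≤ q :=
  Nat.sInf_le ((isPeriod_sub_iff hi hk).2 h)

namespace IsPeriodOn

lemma mono {i' k' : ℕ} (h : IsPeriodOn T i k q) (hi : i ≤ i') (hk : k' ≤ k)
    (hq : q ≤ k' - i') : IsPeriodOn T i' k' q :=
  ⟨h.one_le, hq, fun t ht htk => h.idx_eq t (by omega) (by omega)⟩

lemma idx_add_mul_eq (h : IsPeriodOn T i k q) (d : ℕ) {t : ℕ} (ht : i ≤ t)
    (htk : t + d * q < k) : idx T t = idx T (t + d * q) := by
  induction d with
  | zero => simp
  | succ d ih =>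
    rw [ih (by nlinarith), h.idx_eq (t + d * q) (by omega) (by nlinarith), add_assoc,
      Nat.succ_mul]

lemma idx_eq_of_modEq {a b : ℕ} (h : IsPeriodOn T i k q) (ha : i ≤ a) (hb : i ≤ b)
    (ha' : a < k) (hb' : b < k) (hab : a ≡ b [MOD q]) : idx T a = idx T b := by
  wlog hle : a ≤ b generalizing a b
  · exact (this hb ha hb' ha' hab.symm (by omega)).symm
  obtain ⟨d, hd⟩ := (Nat.modEq_iff_dvd' hle).1 hab
  rw [h.idx_add_mul_eq d ha (by rw [mul_comm]; omega), mul_comm, ← hd, Nat.add_sub_cancel' hle]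

lemma sub_of_lt (hp : IsPeriodOn T i k p) (hq : IsPeriodOn T i k q) (hlt : p < q)
    (hpq : p + q ≤ k - i) : IsPeriodOn T i k (q - p) := by
  refine ⟨by omega, by omega, fun t ht htk => ?_⟩
  by_cases hc : t + q < k
  · rw [hq.idx_eq t ht hc, hp.idx_eq (t + (q - p)) (by omega) (by omega)]
    congr 1
    omega
  · have hback : idx T t = idx T (t - p) := by
      rw [hp.idx_eq (t - p) (by omega) (by omega), Nat.sub_add_cancel (by omega)]
    rw [hback, hq.idx_eq (t - p) (by omega) (by omega)]
    congr 1
    omega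

/-- Fine–Wilf periodicity lemma, in the weak form with `p + q` in place of `p + q - gcd p q`. -/
theorem gcd (hp : IsPeriodOn T i k p) (hq : IsPeriodOn T i k q) (hpq : p + q ≤ k - i) :
    IsPeriodOn T i k (Nat.gcd p q) := by
  induction hN : p + q using Nat.strong_induction_on generalizing p q with
  | _ N ih =>
    wlog hle : p ≤ q generalizing p q
    · rw [Nat.gcd_comm]
      exact this hq hp (by omega) (by omega) (by omega)
    rcases hle.eq_or_lt with rfl | hlt
    · simpa using hp
    · rw [← Nat.gcd_sub_self_right hle]
      exact ih (p + (q - p)) (by have := hp.one_le; omega) hp (hp.sub_of_lt hq hlt hpq)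
        (by omega) rfl

lemma idx_eq_of_add_eq {a b : ℕ} (hp : IsPeriodOn T i k p) (hq : IsPeriodOn T i k q)
    (hpq : p + q ≤ k - i) (ha : i ≤ a) (hb : i ≤ b) (ha' : a < k) (hb' : b < k)
    (hab : a + p = b + q) : idx T a = idx T b := by
  have hp0 : p ≡ 0 [MOD Nat.gcd p q] := Nat.modEq_zero_iff_dvd.2 (Nat.gcd_dvd_left p q)
  have hq0 : q ≡ 0 [MOD Nat.gcd p q] := Nat.modEq_zero_iff_dvd.2 (Nat.gcd_dvd_right p q)
  refine (hp.gcd hq hpq).idx_eq_of_modEq ha hb ha' hb' ?_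
  simpa [hab] using ((Nat.ModEq.add_left a hp0).symm.trans (hab ▸ Nat.ModEq.add_left b hq0))

lemma extend_right {i' k' : ℕ} (hp : IsPeriodOn T i k p) (hq : IsPeriodOn T i' k' q)
    (hi : i ≤ i') (hk : k < k') (hpq : p + q ≤ k - i') : IsPeriodOn T i (k + 1) p := by
  have hp1 := hp.one_le
  have := hq.one_le
  refine ⟨hp1, by have := hp.le_length; omega, fun t ht htk => ?_⟩
  by_cases hc : t + p < k
  · exact hp.idx_eq t ht hc
  · have hlast : idx T (k - q) = idx T k := by
      rw [hq.idx_eq (k - q) (by omega) (by omega)]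
      congr 1
      omega
    rw [show t + p = k by omega, ← hlast]
    exact (hp.mono hi le_rfl (by omega)).idx_eq_of_add_eq (hq.mono le_rfl hk.le (by omega))
      hpq (by omega) (by omega) (by omega) (by omega) (by omega)

lemma extend_left {i' k' : ℕ} (hp : IsPeriodOn T (i + 1) k p) (hq : IsPeriodOn T i' k' q)
    (hi : i' ≤ i) (hk : k ≤ k') (hpq : p + q ≤ k - (i + 1)) : IsPeriodOn T i k p := by
  have hp1 := hp.one_le
  have := hq.one_le
  refine ⟨hp1, by have := hp.le_length; omega, fun t ht htk => ?_⟩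
  by_cases hc : i + 1 ≤ t
  · exact hp.idx_eq t hc htk
  · rw [show t = i by omega, hq.idx_eq i hi (by omega)]
    exact hp.idx_eq_of_add_eq (hq.mono (by omega) hk (by omega)) hpq (by omega) (by omega)
      (by omega) (by omega) (by omega)

end IsPeriodOn

theorem per_sub_succ_eq {L : ℕ} (hi : 1 ≤ i) (hL : i + L ≤ T.length)
    (h : per (sub T i (i + L)) + per (sub T (i + 1) (i + L + 1)) + 1 ≤ L) :
    per (sub T (i + 1) (i + L + 1)) = per (sub T i (i + L)) := by
  set p := per (sub T i (i + L))
  set q := per (sub T (i + 1) (i + L + 1))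
  have hp : IsPeriodOn T i (i + L) p := isPeriodOn_per_sub hi (by omega) (by omega)
  have hq : IsPeriodOn T (i + 1) (i + L + 1) q :=
    isPeriodOn_per_sub (by omega) (by omega) (by omega)
  have hq_le : q ≤ p := per_sub_le (by omega) (by omega) <|
    (hp.mono (by omega) le_rfl (by omega)).extend_right hq le_rfl (by omega) (by omega)
  have hp_le : p ≤ q := per_sub_le hi (by omega) <|
    (hq.mono le_rfl (by omega) (by omega)).extend_left hp le_rfl (by omega) (by omega)
  omega

end Periods

lemma lcp_cons (a b : ℕ) (A B : List ℕ) :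
    lcp (a :: A) (b :: B) = if a = b then lcp A B + 1 else 0 := by
  simp only [lcp, List.zip_cons_cons, List.takeWhile_cons]
  by_cases h : a = b <;> simp [h]

lemma lcp_le_length_right (A B : List ℕ) : lcp A B ≤ B.length :=
  (List.takeWhile_sublist _).length_le.trans (by simp)

lemma getD_eq_of_lt_lcp : ∀ (A B : List ℕ) (t : ℕ), t < lcp A B → A.getD t 0 = B.getD t 0
  | [], _, _ => by simp [lcp]
  | _ :: _, [], _ => by simp [lcp]
  | a :: A, b :: B, t => by
    rw [lcp_cons]
    split_ifs with h
    · cases t with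
      | zero => simpa using h
      | succ t => simpa using getD_eq_of_lt_lcp A B t ∘ Nat.lt_of_succ_lt_succ
    · omega

lemma getD_lcp_ne : ∀ (A B : List ℕ), lcp A B < A.length → lcp A B < B.length →
    A.getD (lcp A B) 0 ≠ B.getD (lcp A B) 0
  | [], _ => by simp [lcp]
  | _ :: _, [] => by simp [lcp]
  | a :: A, b :: B => by
    rw [lcp_cons]
    split_ifs with h
    · simpa using getD_lcp_ne A B
    · simpa using h

lemma le_lcp : ∀ (A B : List ℕ) (m : ℕ), m ≤ A.length → m ≤ B.length →
    (∀ t < m, A.getD t 0 = B.getD t 0) → m ≤ lcp A B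
  | _, _, 0, _, _, _ => Nat.zero_le _
  | a :: A, b :: B, m + 1, hA, hB, h => by
    have hab : a = b := by simpa using h 0 (by omega)
    rw [lcp_cons, if_pos hab]
    have := le_lcp A B m (by simpa using hA) (by simpa using hB)
      (fun t ht => by simpa using h (t + 1) (by omega))
    omega

section LCE

variable {T : List ℕ} {a b : ℕ}

lemma idx_add_eq_of_lt_LCE (ha : 1 ≤ a) (hb : 1 ≤ b) {t : ℕ} (ht : t < LCE T a b) :
    idx T (a + t) = idx T (b + t) := by
  rw [← suf_getD T ha, ← suf_getD T hb]
  exact getD_eq_of_lt_lcp _ _ t ht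

lemma LCE_le : LCE T a b ≤ T.length - (b - 1) :=
  suf_length T b ▸ lcp_le_length_right _ _

lemma le_LCE (ha : 1 ≤ a) (hb : 1 ≤ b) {m : ℕ} (hma : a + m ≤ T.length + 1)
    (hmb : b + m ≤ T.length + 1) (h : ∀ t < m, idx T (a + t) = idx T (b + t)) :
    m ≤ LCE T a b :=
  le_lcp _ _ m (by rw [suf_length]; omega) (by rw [suf_length]; omega)
    (fun t ht => by rw [suf_getD T ha, suf_getD T hb]; exact h t ht)

lemma idx_add_LCE_ne (ha : 1 ≤ a) (hb : 1 ≤ b) (ha' : a + LCE T a b ≤ T.length)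
    (hb' : b + LCE T a b ≤ T.length) : idx T (a + LCE T a b) ≠ idx T (b + LCE T a b) := by
  unfold LCE at *
  rw [← suf_getD T ha, ← suf_getD T hb]
  exact getD_lcp_ne _ _ (by rw [suf_length]; omega) (by rw [suf_length]; omega)

lemma add_LCE_le_length (hlast : idx T T.length = 0)
    (huniq : ∀ i, 1 ≤ i → i < T.length → idx T i ≠ 0) (ha : 1 ≤ a) (hab : a < b)
    (hb : b ≤ T.length) : b + LCE T a b ≤ T.length := by
  by_contra hlt
  have hℓ : LCE T a b = T.length + 1 - b := by have := LCE_le (T := T) (a := a) (b := b); omega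
  have h := idx_add_eq_of_lt_LCE ha (by omega) (show LCE T a b - 1 < LCE T a b by omega)
  rw [show b + (LCE T a b - 1) = T.length by omega, hlast] at h
  exact huniq _ (by omega) (by omega) h

lemma IsPeriodOn.le_LCE {i k p : ℕ} (hi : 1 ≤ i) (hk : k ≤ T.length + 1)
    (h : IsPeriodOn T i k p) : k - i - p ≤ LCE T i (i + p) := by
  have := h.one_le
  have := h.le_length
  refine CSA.le_LCE hi (by omega) (by omega) (by omega) fun t ht => ?_
  rw [add_right_comm]
  exact h.idx_eq (i + t) (by omega) (by omega)

lemma isPeriodOn_LCE {i p : ℕ} (hi : 1 ≤ i) (hp : 1 ≤ p) :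
    IsPeriodOn T i (i + p + LCE T i (i + p)) p :=
  ⟨hp, by omega, fun t ht htk => by
    have h := idx_add_eq_of_lt_LCE (T := T) hi (by omega) (show t - i < LCE T i (i + p) by omega)
    rwa [Nat.add_sub_cancel' ht, add_right_comm, Nat.add_sub_cancel' ht] at h⟩

end LCE

section Runs

variable {T : List ℕ} {τ i e p : ℕ}

lemma mem_R_of_isPeriodOn (hi : 1 ≤ i) (hi' : i + 3 * τ ≤ T.length + 2)
    (h : IsPeriodOn T i (i + 3 * τ - 1) p) (hp : 3 * p ≤ τ) : i ∈ R T τ :=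
  ⟨hi, hi', by have := per_sub_le hi (by omega) h; omega⟩

/-- `e + 2 - 3τ` is the first window containing the break at `e`; a period of it would extend
the run past the break. -/
lemma not_mem_R_of_run_end (hτ : 1 ≤ τ) (hrun : IsPeriodOn T i e p) (hp : 3 * p ≤ τ)
    (hbreak : idx T (e - p) ≠ idx T e) (hlong : i + 3 * τ ≤ e + 2) :
    e + 2 - 3 * τ ∉ R T τ := by
  rintro ⟨hm, hm', hper⟩
  rw [show e + 2 - 3 * τ + 3 * τ - 1 = e + 1 by omega] at hper
  have hq := isPeriodOn_per_sub (T := T) (k := e + 1) hm (by omega) (by omega)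
  have hext := hrun.extend_right hq (by omega) (by omega) (by have := hq.one_le; omega)
  have := hrun.le_length
  apply hbreak
  rw [hext.idx_eq (e - p) (by omega) (by omega), Nat.sub_add_cancel (by omega)]

lemma rend_eq_of_run (hτ : 1 ≤ τ) (hi : 1 ≤ i) (he : e ≤ T.length)
    (hrun : IsPeriodOn T i e p) (hp : 3 * p ≤ τ) (hbreak : idx T (e - p) ≠ idx T e)
    (hlong : i + 3 * τ ≤ e + 2) : rend T τ i = e := by
  have hend : e + 2 - 3 * τ ∈ {j' | i ≤ j' ∧ j' ∉ R T τ} :=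
    ⟨by omega, not_mem_R_of_run_end hτ hrun hp hbreak hlong⟩
  have hinf : sInf {j' | i ≤ j' ∧ j' ∉ R T τ} = e + 2 - 3 * τ := by
    refine le_antisymm (Nat.sInf_le hend) (le_csInf ⟨_, hend⟩ ?_)
    rintro j' ⟨hj', hnot⟩
    by_contra! hlt
    exact hnot (mem_R_of_isPeriodOn (by omega) (by omega)
      (hrun.mono hj' (by omega) (by have := hrun.one_le; omega)) hp)
  rw [rend, hinf]
  omega

end Runs

theorem statement_0_general
    (n τ : ℕ) (T : List ℕ)
    (hτ : 1 ≤ τ)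
    (hlen : T.length = n)
    (hlast : idx T n = 0) (huniq : ∀ i, 1 ≤ i → i < n → idx T i ≠ 0)
    (j : ℕ) (hj : j ∈ R T τ)
    (p : ℕ) (hp : p = per (sub T j (j + 3 * τ - 1))) :
    (j + 1 ∈ R T τ → per (sub T (j + 1) (j + 3 * τ)) = p) ∧
    rend T τ j = j + p + LCE T j (j + p) := by
  subst hlen
  obtain ⟨hj1, hjlen, hjper⟩ := hj
  rw [← hp] at hjper
  have hwin : IsPeriodOn T j (j + 3 * τ - 1) p :=
    hp ▸ isPeriodOn_per_sub hj1 (by omega) (by omega)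
  have hp1 := hwin.one_le
  refine ⟨fun ⟨_, hj'len, hj'per⟩ => ?_, ?_⟩
  · rw [show j + 1 + 3 * τ - 1 = j + (3 * τ - 1) + 1 by omega] at hj'per
    rw [hp, show j + 3 * τ - 1 = j + (3 * τ - 1) by omega] at hjper ⊢
    rw [show j + 3 * τ = j + (3 * τ - 1) + 1 by omega]
    exact per_sub_succ_eq hj1 (by omega) (by omega)
  · have hℓ : j + 3 * τ - 1 - j - p ≤ LCE T j (j + p) := hwin.le_LCE hj1 (by omega)
    have hend := add_LCE_le_length hlast huniq hj1 (show j < j + p by omega) (by omega)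
    refine rend_eq_of_run hτ hj1 hend (isPeriodOn_LCE hj1 hp1) hjper ?_ (by omega)
    rw [show j + p + LCE T j (j + p) - p = j + LCE T j (j + p) by omega]
    exact idx_add_LCE_ne hj1 (by omega) (by omega) hend

/-- Lemma: run end. Let `j ∈ R` and `p = per(T[j..j+3τ−1))`. Then:
(1) if `j+1 ∈ R`, then `per(T[j+1..j+3τ)) = p`; and (2) `rend(j) = j + p + LCE(j, j+p)`. -/
theorem statement_0
    (σ n τ : ℕ) (T : List ℕ)
    (hσ : 2 ≤ σ) (hn : 2 ≤ n) (hτ : 1 ≤ τ)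
    (hlen : T.length = n) (halph : ∀ c ∈ T, c < σ)
    (hlast : idx T n = 0) (huniq : ∀ i, 1 ≤ i → i < n → idx T i ≠ 0)
    (j : ℕ) (hj : j ∈ R T τ)
    (p : ℕ) (hp : p = per (sub T j (j + 3 * τ - 1))) :
    (j + 1 ∈ R T τ → per (sub T (j + 1) (j + 3 * τ)) = p) ∧
    rend T τ j = j + p + LCE T j (j + p) :=
  statement_0_general n τ T hτ hlen hlast huniq j hj p hp
end CSA
end

section
/- Let j, j′, j′′ ∈ [1..n] be such that j, j′′ ∈ R, j′ ∉ R, and j < j′ < j′′. Then rend(j) ≤ j′′ + τ − 1 and j′′ − j ≥ 2τ. -/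
open scoped Classical

namespace CSA

/-!
Two periodic windows of length `3τ - 1` whose starting points are less than `2τ` apart overlap in
at least `τ ≥ p + q` positions, where `p, q ≤ τ/3` are their periods. Overlap `p + q` is enough to
propagate the period `p` of the first window across the second one (shift back by `q` until the
first window is reached), so every window in between has period at most `τ/3` and lies in `R`.
Applied to the last position `m - 1` of the run of `R` starting at `j` (where `m` is the first
position after `j` outside `R`) and to `j''`, this gives `j'' ≥ m - 1 + 2τ`, which yields both
inequalities.
-/

def HasPeriodOn {α : Type*} (f : ℕ → α) (p a b : ℕ) : Prop :=
  ∀ i, a ≤ i → i + p < b → f i = f (i + p)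

namespace HasPeriodOn

variable {α : Type*} {f : ℕ → α} {p q a b c d : ℕ}

lemma mono (h : HasPeriodOn f p a b) (hca : a ≤ c) (hdb : d ≤ b) : HasPeriodOn f p c d :=
  fun i hi hip => h i (hca.trans hi) (by omega)

lemma extend (hp : HasPeriodOn f p a b) (hq : HasPeriodOn f q c d) (hq0 : 0 < q) (hac : a ≤ c)
    (hoverlap : c + q + p ≤ b) : HasPeriodOn f p a d := by
  intro i
  induction i using Nat.strong_induction_on with
  | _ i ih =>
    intro hai hid
    by_cases hib : i + p < b
    · exact hp i hai hib
    · have hshift : f (i - q) = f (i - q + p) := ih (i - q) (by omega) (by omega) (by omega)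
      calc f i = f (i - q) := by simpa [Nat.sub_add_cancel (by omega : q ≤ i)]
                                  using (hq (i - q) (by omega) (by omega)).symm
        _ = f (i + p - q) := by rw [hshift]; congr 1; omega
        _ = f (i + p) := by simpa [Nat.sub_add_cancel (by omega : q ≤ i + p)]
                              using hq (i + p - q) (by omega) (by omega)

end HasPeriodOn

lemma isPeriod_per {S : List ℕ} (hS : S ≠ []) : IsPeriod S (per S) :=
  Nat.sInf_mem (s := {p | IsPeriod S p})
    ⟨S.length, List.length_pos_iff.mpr hS, le_rfl, fun _ hi => by omega⟩

lemma per_le_of_isPeriod {S : List ℕ} {p : ℕ} (h : IsPeriod S p) : per S ≤ p :=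
  Nat.sInf_le h

lemma isPeriod_take_drop_iff {S : List ℕ} {s m p : ℕ} (h : s + m ≤ S.length) :
    IsPeriod ((S.drop s).take m) p ↔
      1 ≤ p ∧ p ≤ m ∧ HasPeriodOn (S.getD · 0) p s (s + m) := by
  have hlen : ((S.drop s).take m).length = m := by simp; omega
  have hget : ∀ k, k < m → ((S.drop s).take m).getD k 0 = S.getD (s + k) 0 := by
    intro k hk
    simp [List.getD_eq_getElem?_getD, hk]
  simp only [IsPeriod, hlen, HasPeriodOn, and_congr_right_iff]
  intro _ _
  constructor
  · intro hP i hsi hip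
    have := hP (i - s) (by omega)
    rwa [hget _ (by omega), hget _ (by omega), Nat.add_sub_cancel' hsi,
      ← Nat.add_assoc, Nat.add_sub_cancel' hsi] at this
  · intro hP k hk
    rw [hget _ (by omega), hget _ (by omega), ← Nat.add_assoc]
    exact hP (s + k) (by omega) (by omega)

lemma sub_window_eq (T : List ℕ) (τ i : ℕ) :
    sub T i (i + 3 * τ - 1) = (T.drop (i - 1)).take (3 * τ - 1) := by
  unfold sub; congr 1; omega

lemma mem_R_iff {T : List ℕ} {τ i : ℕ} (hτ : 1 ≤ τ) :
    i ∈ R T τ ↔ 1 ≤ i ∧ i + 3 * τ ≤ T.length + 2 ∧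
      ∃ p, 1 ≤ p ∧ 3 * p ≤ τ ∧ HasPeriodOn (T.getD · 0) p (i - 1) (i - 1 + (3 * τ - 1)) := by
  simp only [R, Set.mem_ofPred_eq, sub_window_eq, and_congr_right_iff]
  intro _ hi
  have hfit : i - 1 + (3 * τ - 1) ≤ T.length := by omega
  constructor
  · intro hper
    have hne : (T.drop (i - 1)).take (3 * τ - 1) ≠ [] :=
      List.ne_nil_of_length_pos (by simp; omega)
    obtain ⟨hp1, -, hp⟩ := (isPeriod_take_drop_iff hfit).mp (isPeriod_per hne)
    exact ⟨_, hp1, hper, hp⟩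
  · rintro ⟨p, hp1, hpτ, hp⟩
    have := per_le_of_isPeriod ((isPeriod_take_drop_iff hfit).mpr ⟨hp1, by omega, hp⟩)
    omega

lemma mem_R_of_lt_of_lt {T : List ℕ} {τ a b c : ℕ} (ha : a ∈ R T τ) (hc : c ∈ R T τ)
    (hab : a < b) (hbc : b < c) (hca : c < a + 2 * τ) : b ∈ R T τ := by
  have hτ : 1 ≤ τ := by omega
  obtain ⟨ha_pos, -, p, hp1, hpτ, hp⟩ := (mem_R_iff hτ).mp ha
  obtain ⟨-, hc_fit, q, hq1, hqτ, hq⟩ := (mem_R_iff hτ).mp hc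
  have hext := hp.extend hq hq1 (by omega) (by omega)
  exact (mem_R_iff hτ).mpr ⟨by omega, by omega, p, hp1, hpτ, hext.mono (by omega) (by omega)⟩

theorem statement_3_general
    (τ : ℕ) (T : List ℕ)
    (j j' j'' : ℕ)
    (hj : j ∈ R T τ) (hj'' : j'' ∈ R T τ) (hj' : j' ∉ R T τ)
    (h1 : j < j') (h2 : j' < j'') :
    rend T τ j ≤ j'' + τ - 1 ∧ 2 * τ ≤ j'' - j := by
  set m := sInf {x | j ≤ x ∧ x ∉ R T τ} with hm_def
  obtain ⟨hjm_le, hm⟩ : j ≤ m ∧ m ∉ R T τ :=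
    Nat.sInf_mem (s := {x | j ≤ x ∧ x ∉ R T τ}) ⟨j', h1.le, hj'⟩
  have hmj' : m ≤ j' := Nat.sInf_le ⟨h1.le, hj'⟩
  have hjm : j < m := lt_of_le_of_ne hjm_le fun h => hm (h ▸ hj)
  have hm1 : m - 1 ∈ R T τ := by
    by_contra h
    have : m ≤ m - 1 := Nat.sInf_le ⟨by omega, h⟩
    omega
  have hgap : m - 1 + 2 * τ ≤ j'' := by
    by_contra h
    exact hm (mem_R_of_lt_of_lt hm1 hj'' (by omega) (by omega) (by omega))
  exact ⟨by rw [rend, ← hm_def]; omega, by omega⟩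

/-- Lemma: gap between runs. -/
theorem statement_3
    (σ n τ : ℕ) (T : List ℕ)
    (hσ : 2 ≤ σ) (hn : 2 ≤ n) (hτ : 1 ≤ τ)
    (hlen : T.length = n) (halph : ∀ c ∈ T, c < σ)
    (hlast : idx T n = 0) (huniq : ∀ i, 1 ≤ i → i < n → idx T i ≠ 0)
    (j j' j'' : ℕ)
    (hjr : 1 ≤ j) (hjn : j ≤ n) (hj'r : 1 ≤ j') (hj'n : j' ≤ n)
    (hj''r : 1 ≤ j'') (hj''n : j'' ≤ n)
    (hj : j ∈ R T τ) (hj'' : j'' ∈ R T τ) (hj' : j' ∉ R T τ)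
    (h1 : j < j') (h2 : j' < j'') :
    rend T τ j ≤ j'' + τ - 1 ∧ 2 * τ ≤ j'' - j :=
  statement_3_general τ T j j' j'' hj hj'' hj' h1 h2
end CSA
end

section
/- Let i ∈ [1..n] be such that SA[i] ∈ [1..n−3τ+2] and SA[i] ∉ R, and let X ∈ D be a prefix of T[SA[i]..n]. Denote δ_text = |X| − 2τ, b_X = RangeBeg(X,T), and for j ∈ [1..n] let δ(j) = |{j′ ∈ [1..n] : LCE(j,j′) ≥ |X| and T[j′..n] ⪯ T[j..n]}|. Then: (1) i = b_X + δ(SA[i]); and (2) if y is the (i − b_X)-th smallest element of {i′ ∈ [1..n′] : the reverse of X is a prefix of W[i′]}, then s^lex_y = SA[i] + δ_text. -/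
open scoped Classical

namespace CSA

/-!
(1) A suffix of `T` is at most `T[SA[i]..n]` iff it is smaller than `X` or it starts with `X`
and is at most `T[SA[i]..n]`; the LCE condition in `δ` only says that `X` occurs there.

(2) `X = T[i₀..s₀+2τ)` with `s₀ = succ_S(i₀) ∈ S` and `d = s₀ - i₀ < τ`, so by consistency
every occurrence `j` of `X` has `j + d ∈ S`. Conversely the reverse of `X` is a prefix of `W[a]`
iff `X` occurs at `s^lex_a - d`: a match wrapping around `T^∞` would put the unique sentinel
`T[n] = 0` among the first `d` letters of `X`. Removing the common prefix `X[1..d]` preserves the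
order of suffixes, so `a ↦ s^lex_a - d` is an order isomorphism from the rows of `W` matching `X`
onto the occurrences of `X`, and comparing ranks gives `s^lex_y - d = SA[i]`.
-/

section ListLex

variable {α : Type*} [LinearOrder α]

theorem isPrefix_or_lt_of_le {X A B : List α} (hXA : X <+: A) (hBA : B ≤ A) :
    X <+: B ∨ B < X := by
  induction X generalizing A B with
  | nil => exact Or.inl List.nil_prefix
  | cons x X ih =>
    obtain ⟨t, rfl⟩ := hXA
    match B, hBA.lt_or_eq with
    | [], _ => exact Or.inr (List.nil_lt_cons _ _)
    | b :: B, Or.inr h => exact Or.inl (h ▸ List.prefix_append _ _)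
    | b :: B, Or.inl h =>
      rcases List.cons_lt_cons_iff.mp h with hb | ⟨rfl, hB⟩
      · exact Or.inr (List.cons_lt_cons_iff.mpr (Or.inl hb))
      · rcases ih (List.prefix_append X t) hB.le with h' | h'
        · exact Or.inl (List.cons_prefix_cons.mpr ⟨rfl, h'⟩)
        · exact Or.inr (List.cons_lt_cons_iff.mpr (Or.inr ⟨rfl, h'⟩))

-- `List.IsPrefix.le` is about core's `≤` on lists, not the order of `LinearOrder (List α)`.
theorem isPrefix_le {X A : List α} (h : X <+: A) : X ≤ A :=
  not_lt.mp h.le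

theorem append_le_append_left_iff (C : List α) {A B : List α} : C ++ A ≤ C ++ B ↔ A ≤ B := by
  refine ⟨fun h => not_lt.mp fun hlt => (List.append_left_lt hlt).not_ge h, fun h => ?_⟩
  rcases h.lt_or_eq with hlt | rfl
  exacts [(List.append_left_lt hlt).le, le_rfl]

theorem card_filter_le_eq_add_of_isPrefix {γ : Type*} (t : Finset γ) (f : γ → List α)
    {X A : List α} (hXA : X <+: A) :
    (t.filter fun j => f j ≤ A).card =
      (t.filter fun j => f j < X).card + (t.filter fun j => X <+: f j ∧ f j ≤ A).card := by
  rw [← Finset.card_union_of_disjoint]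
  · congr 1
    ext j
    simp only [Finset.mem_filter, Finset.mem_union]
    constructor
    · rintro ⟨hj, hle⟩
      rcases isPrefix_or_lt_of_le hXA hle with h | h
      exacts [Or.inr ⟨hj, h, hle⟩, Or.inl ⟨hj, h⟩]
    · rintro (⟨hj, hlt⟩ | ⟨hj, -, hle⟩)
      exacts [⟨hj, (hlt.trans_le (isPrefix_le hXA)).le⟩, ⟨hj, hle⟩]
  · exact Finset.disjoint_filter.mpr fun j _ hlt ⟨hX, _⟩ => (isPrefix_le hX).not_gt hlt

end ListLex

section Rank

variable {α β γ : Type*} [LinearOrder α] [LinearOrder β]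

theorem card_filter_le_eq_card_filter_key_le {s : Finset α} {t : Finset γ} {g : α → γ}
    {key : γ → β} (hmaps : Set.MapsTo g s t) (hsurj : Set.SurjOn g s t)
    (hmono : ∀ a ∈ s, ∀ b ∈ s, key (g a) ≤ key (g b) ↔ a ≤ b) {y : α} (hy : y ∈ s) :
    (s.filter (· ≤ y)).card = (t.filter fun j => key j ≤ key (g y)).card := by
  apply Finset.card_nbij g
  · intro a ha
    simp only [Finset.coe_filter, Set.mem_ofPred_eq] at ha ⊢
    exact ⟨hmaps ha.1, (hmono a ha.1 y hy).mpr ha.2⟩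
  · intro a ha b hb hab
    simp only [Finset.coe_filter, Set.mem_ofPred_eq] at ha hb
    exact le_antisymm ((hmono a ha.1 b hb.1).mp (hab ▸ le_rfl))
      ((hmono b hb.1 a ha.1).mp (hab ▸ le_rfl))
  · intro j hj
    simp only [Finset.coe_filter, Set.mem_ofPred_eq] at hj
    obtain ⟨a, ha, rfl⟩ := hsurj hj.1
    exact ⟨a, by simpa using ⟨ha, (hmono a ha y hy).mp hj.2⟩, rfl⟩

theorem card_filter_key_le_lt {t : Finset γ} {key : γ → β} {a b : γ} (hb : b ∈ t)
    (hab : key a < key b) :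
    (t.filter fun j => key j ≤ key a).card < (t.filter fun j => key j ≤ key b).card := by
  refine Finset.card_lt_card ((Finset.ssubset_iff_of_subset ?_).mpr ⟨b, ?_, ?_⟩)
  · intro j
    simp only [Finset.mem_filter]
    exact fun h => ⟨h.1, h.2.trans hab.le⟩
  · simpa using hb
  · simp [hab]

theorem eq_of_card_filter_key_le_eq {t : Finset γ} {key : γ → β} (hinj : Set.InjOn key t)
    {a b : γ} (ha : a ∈ t) (hb : b ∈ t)
    (h : (t.filter fun j => key j ≤ key a).card = (t.filter fun j => key j ≤ key b).card) :
    a = b := by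
  rcases lt_trichotomy (key a) (key b) with hlt | heq | hgt
  · exact absurd h (card_filter_key_le_lt hb hlt).ne
  · exact hinj ha hb heq
  · exact absurd h (card_filter_key_le_lt ha hgt).ne'

theorem ncard_setOf_Icc_and (N : ℕ) (p : ℕ → Prop) :
    {j | 1 ≤ j ∧ j ≤ N ∧ p j}.ncard = ((Finset.Icc 1 N).filter p).card := by
  rw [← Set.ncard_coe_finset]
  congr 1
  ext j
  simp [and_assoc]

end Rank

theorem le_lcp_iff : ∀ (A B : List ℕ) (k : ℕ),
    k ≤ lcp A B ↔ k ≤ A.length ∧ k ≤ B.length ∧ A.take k = B.take k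
  | [], _, k => by simp [lcp]; omega
  | _ :: _, [], k => by simp [lcp]; omega
  | _ :: _, _ :: _, 0 => by simp
  | a :: A, b :: B, k + 1 => by
    by_cases hab : a = b
    · subst hab
      simpa [lcp] using le_lcp_iff A B k
    · simp [lcp, hab]

theorem length_le_lcp_iff_isPrefix {X A : List ℕ} (B : List ℕ) (hXA : X <+: A) :
    X.length ≤ lcp A B ↔ X <+: B := by
  rw [le_lcp_iff, List.prefix_iff_eq_take (l₂ := B)]
  rw [List.prefix_iff_eq_take] at hXA
  exact ⟨fun h => hXA.trans h.2.2, fun h => ⟨hXA ▸ by simp, h ▸ by simp, hXA.symm.trans h⟩⟩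

section Suffixes

variable (T : List ℕ)

theorem length_suf (j : ℕ) : (suf T j).length = T.length - (j - 1) :=
  List.length_drop

theorem drop_suf {j : ℕ} (hj : 1 ≤ j) (d : ℕ) : (suf T j).drop d = suf T (j + d) := by
  simp only [suf, List.drop_drop]
  congr 1
  omega

theorem take_suf {j k : ℕ} (hj : 1 ≤ j) (hk : j + k ≤ T.length + 1) :
    (suf T j).take k = (List.range k).map fun m => idx T (j + m) := by
  apply List.ext_getElem
  · simp [suf]
    omega
  · intro m h₁ h₂
    simp only [List.length_take, length_suf] at h₁
    simp [suf, idx, show j + m - 1 = j - 1 + m by omega,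
      List.getElem?_eq_getElem (show j - 1 + m < T.length by omega)]

theorem suf_injOn : Set.InjOn (suf T) (Set.Icc 1 T.length) := by
  intro j hj j' hj' h
  have := congrArg List.length h
  simp only [length_suf] at this
  simp only [Set.mem_Icc] at hj hj'
  omega

theorem sub_eq_of_isPrefix {X : List ℕ} {j : ℕ} (hj : 1 ≤ j) (hX : X <+: suf T j) (d k : ℕ)
    (hk : d + k ≤ X.length) :
    sub T (j + d) (j + d + k) = (X.drop d).take k := by
  obtain ⟨t, ht⟩ := hX
  have hsub : sub T (j + d) (j + d + k) = ((suf T j).drop d).take k := by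
    rw [drop_suf T hj]
    simp [sub, suf]
  rw [hsub, ← ht, List.drop_append_of_le_length (by omega),
    List.take_append_of_le_length (by simp; omega)]

theorem suf_le_suf_iff_of_isPrefix {X : List ℕ} {j₁ j₂ d : ℕ} (hj₁ : 1 ≤ j₁) (hj₂ : 1 ≤ j₂)
    (h₁ : X <+: suf T j₁) (h₂ : X <+: suf T j₂) (hd : d ≤ X.length) :
    suf T (j₁ + d) ≤ suf T (j₂ + d) ↔ suf T j₁ ≤ suf T j₂ := by
  have hsplit : ∀ j, 1 ≤ j → X <+: suf T j → suf T j = X.take d ++ suf T (j + d) := by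
    intro j hj hX
    obtain ⟨t, ht⟩ := hX
    rw [← drop_suf T hj, ← ht, List.drop_append_of_le_length hd, ← List.append_assoc,
      List.take_append_drop]
  rw [hsplit j₁ hj₁ h₁, hsplit j₂ hj₂ h₂, append_le_append_left_iff]

theorem tinf_natCast {p : ℕ} (hp : 1 ≤ p) (hpn : p ≤ T.length) : tinf T p = idx T p := by
  change idx T ((((p : ℤ) - 1) % T.length).toNat + 1) = _
  rw [Int.emod_eq_of_lt (by omega) (by omega)]
  congr 1
  omega

theorem tinf_zero : tinf T 0 = idx T T.length := by
  change idx T ((((0 : ℤ) - 1) % T.length).toNat + 1) = _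
  rcases Nat.eq_zero_or_pos T.length with h | h
  · simp [h, idx]
  · rw [show (0 : ℤ) - 1 = (T.length - 1 : ℤ) + T.length * (-1) by ring,
      Int.add_mul_emod_self_left, Int.emod_eq_of_lt (by omega) (by omega)]
    congr 1
    omega

end Suffixes

def occs (X T : List ℕ) : Finset ℕ := (Finset.Icc 1 T.length).filter fun j => X <+: suf T j

theorem coe_occs_subset_Icc (X T : List ℕ) : ↑(occs X T) ⊆ Set.Icc 1 T.length :=
  fun _ hj => Finset.mem_Icc.mp (Finset.mem_filter.mp hj).1

theorem ncard_length_le_LCE_eq_card_occs {T X : List ℕ} {j : ℕ} (hX : X <+: suf T j) :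
    {j' | 1 ≤ j' ∧ j' ≤ T.length ∧ X.length ≤ LCE T j j' ∧ suf T j' ≤ suf T j}.ncard =
      ((occs X T).filter fun j' => suf T j' ≤ suf T j).card := by
  rw [ncard_setOf_Icc_and, occs, Finset.filter_filter]
  congr! 2 with j'
  rw [LCE, length_le_lcp_iff_isPrefix _ hX]

section Wstr

variable (T : List ℕ) (τ : ℕ) (slex : ℕ → ℕ)

theorem Wstr_eq (a : ℕ) :
    Wstr T τ slex a = ((List.range (3 * τ)).map fun k : ℕ => tinf T (slex a - τ + k)).reverse := by
  simp [Wstr, ← List.map_eq_flatMap]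

theorem reverse_isPrefix_Wstr_iff {X : List ℕ} (hX : X.length ≤ 3 * τ) (a : ℕ) :
    X.reverse <+: Wstr T τ slex a ↔
      X = (List.range X.length).map fun m : ℕ => tinf T (slex a + 2 * τ - X.length + m) := by
  obtain ⟨e, he⟩ : ∃ e, 3 * τ = e + X.length := ⟨3 * τ - X.length, by omega⟩
  rw [Wstr_eq, List.reverse_prefix, List.suffix_iff_eq_drop, List.length_map, List.length_range,
    he, List.range_add, List.map_append, List.map_map, Nat.add_sub_cancel,
    List.drop_left' (by simp)]
  refine Eq.congr_right (List.map_congr_left fun m _ => congrArg (tinf T) ?_)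
  push_cast
  omega

theorem reverse_isPrefix_Wstr_iff_mem_occs (hlast : idx T T.length = 0) {X : List ℕ}
    {d : ℕ} (hXd : X.length = d + 2 * τ) (hdτ : d < τ) (hX0 : 0 ∉ X.take d) {a : ℕ}
    (ha : 1 ≤ slex a) (han : slex a + 2 * τ ≤ T.length + 1) :
    X.reverse <+: Wstr T τ slex a ↔ d < slex a ∧ slex a - d ∈ occs X T := by
  rw [reverse_isPrefix_Wstr_iff T τ slex (by omega), hXd]
  by_cases hd : d < slex a
  · have hocc : slex a - d ∈ occs X T ↔ X <+: suf T (slex a - d) := by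
      simp only [occs, Finset.mem_filter, Finset.mem_Icc]
      exact and_iff_right ⟨by omega, by omega⟩
    rw [hocc, List.prefix_iff_eq_take, hXd, take_suf T (by omega) (by omega)]
    simp only [hd, true_and]
    refine Eq.congr_right (List.map_congr_left fun m hm => ?_)
    rw [List.mem_range] at hm
    rw [← tinf_natCast T (by omega) (by omega)]
    congr 1
    push_cast [Nat.sub_add_comm hd.le]
    omega
  · simp only [hd, false_and, iff_false]
    intro hX
    refine hX0 ?_
    rw [hX, ← List.map_take, List.take_range, List.mem_map]
    refine ⟨d - slex a, by simp; omega, ?_⟩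
    rw [← hlast, ← tinf_zero]
    congr 1
    omega

end Wstr

section Synchronizing

variable {T : List ℕ} {τ : ℕ} {Sync : Set ℕ}

theorem succS_mem_of_nonempty (hSyncRange : ∀ j ∈ Sync, j + 2 * τ ≤ T.length + 1) {i : ℕ}
    (hne : (Sync ∩ Set.Ico i (i + τ)).Nonempty) :
    succS T τ Sync i ∈ Sync ∧ i ≤ succS T τ Sync i ∧ succS T τ Sync i < i + τ := by
  obtain ⟨z, hz, hiz, hzi⟩ := hne
  have hzmem : z ∈ {j | i ≤ j ∧ (j ∈ Sync ∨ j = T.length + 2 - 2 * τ)} := ⟨hiz, Or.inl hz⟩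
  obtain ⟨hi, hmem⟩ := Nat.sInf_mem ⟨z, hzmem⟩
  have hle : succS T τ Sync i ≤ z := Nat.sInf_le hzmem
  have := hSyncRange z hz
  refine ⟨hmem.resolve_right fun h => ?_, hi, hle.trans_lt hzi⟩
  unfold succS at hle
  omega

theorem exists_sync_offset_of_mem_Dset (hSyncRange : ∀ j ∈ Sync, j + 2 * τ ≤ T.length + 1)
    (hDens : ∀ i : ℕ, 1 ≤ i → i + 3 * τ ≤ T.length + 2 →
      (Sync ∩ Set.Ico i (i + τ) = ∅ ↔ i ∈ R T τ))
    {X : List ℕ} (hX : X ∈ Dset T τ Sync) :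
    ∃ i₀ d, i₀ ∈ occs X T ∧ d < τ ∧ X.length = d + 2 * τ ∧ i₀ + d ∈ Sync := by
  obtain ⟨i₀, hi₀, hi₀n, hi₀R, rfl⟩ := hX
  obtain ⟨hmem, hle, hlt⟩ := succS_mem_of_nonempty hSyncRange
    (Set.nonempty_iff_ne_empty.mpr (mt (hDens i₀ hi₀ hi₀n).mp hi₀R))
  have := hSyncRange _ hmem
  refine ⟨i₀, succS T τ Sync i₀ - i₀, ?_, by omega, ?_, ?_⟩
  · simp only [occs, Finset.mem_filter, Finset.mem_Icc]
    exact ⟨⟨hi₀, by omega⟩, List.take_prefix _ _⟩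
  · simp [sub]
    omega
  · rwa [Nat.add_sub_cancel' hle]

theorem add_mem_of_mem_occs
    (hCons : ∀ i j : ℕ, 1 ≤ i → i + 2 * τ ≤ T.length + 1 → 1 ≤ j → j + 2 * τ ≤ T.length + 1 →
      sub T i (i + 2 * τ) = sub T j (j + 2 * τ) → (i ∈ Sync ↔ j ∈ Sync))
    {X : List ℕ} {d : ℕ} (hXd : d + 2 * τ ≤ X.length) {i₀ : ℕ} (hi₀ : i₀ ∈ occs X T)
    (hsync : i₀ + d ∈ Sync) {j : ℕ} (hj : j ∈ occs X T) : j + d ∈ Sync := by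
  simp only [occs, Finset.mem_filter, Finset.mem_Icc] at hi₀ hj
  obtain ⟨⟨hi₀, hi₀n⟩, hX₀⟩ := hi₀
  obtain ⟨⟨hj, hjn⟩, hX⟩ := hj
  have h₀ := hX₀.length_le
  have h := hX.length_le
  rw [length_suf] at h₀ h
  refine (hCons _ _ (by omega) (by omega) (by omega) (by omega) ?_).mp hsync
  rw [sub_eq_of_isPrefix T hi₀ hX₀ d _ hXd, sub_eq_of_isPrefix T hj hX d _ hXd]

theorem zero_notMem_take (huniq : ∀ i, 1 ≤ i → i < T.length → idx T i ≠ 0) {X : List ℕ}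
    {d : ℕ} (hd : d ≤ X.length) {i₀ : ℕ} (hi₀ : i₀ ∈ occs X T) (hid : i₀ + d < T.length) :
    0 ∉ X.take d := by
  simp only [occs, Finset.mem_filter, Finset.mem_Icc] at hi₀
  obtain ⟨⟨hi₀, -⟩, t, ht⟩ := hi₀
  rw [← List.take_append_of_le_length hd (l₂ := t), ht, take_suf T hi₀ (by omega), List.mem_map]
  rintro ⟨m, hm, h⟩
  exact huniq (i₀ + m) (by omega) (by simp at hm; omega) h

theorem setOf_reverse_isPrefix_Wstr_eq (hlast : idx T T.length = 0)
    (hSyncRange : ∀ i ∈ Sync, 1 ≤ i ∧ i + 2 * τ ≤ T.length + 1) {n' : ℕ} {slex : ℕ → ℕ}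
    (hslexMem : ∀ i, 1 ≤ i → i ≤ n' → slex i ∈ Sync) {X : List ℕ} {d : ℕ}
    (hXd : X.length = d + 2 * τ) (hdτ : d < τ) (hX0 : 0 ∉ X.take d) :
    {a | 1 ≤ a ∧ a ≤ n' ∧ X.reverse <+: Wstr T τ slex a} =
      ↑((Finset.Icc 1 n').filter fun a => d < slex a ∧ slex a - d ∈ occs X T) := by
  ext a
  simp only [Finset.coe_filter, Finset.mem_Icc, Set.mem_ofPred_eq, and_assoc]
  refine and_congr_right fun ha => and_congr_right fun han => ?_
  have := hSyncRange _ (hslexMem a ha han)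
  exact reverse_isPrefix_Wstr_iff_mem_occs T τ slex hlast hXd hdτ hX0 this.1 this.2

end Synchronizing

section SuffixRanks

variable {T : List ℕ}

theorem eq_card_filter_suf_le_of_sorted {SA : ℕ → ℕ}
    (hSAmem : ∀ i, 1 ≤ i → i ≤ T.length → 1 ≤ SA i ∧ SA i ≤ T.length)
    (hSAsurj : ∀ j, 1 ≤ j → j ≤ T.length → ∃ i, 1 ≤ i ∧ i ≤ T.length ∧ SA i = j)
    (hSAsorted : ∀ i i', 1 ≤ i → i < i' → i' ≤ T.length → suf T (SA i) < suf T (SA i'))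
    {i : ℕ} (hi : i ∈ Finset.Icc 1 T.length) :
    i = ((Finset.Icc 1 T.length).filter fun j => suf T j ≤ suf T (SA i)).card := by
  have hmono : StrictMonoOn (fun a => suf T (SA a)) (Set.Icc 1 T.length) :=
    fun a ha b hb hab => hSAsorted a b ha.1 hab hb.2
  calc i = ((Finset.Icc 1 T.length).filter (· ≤ i)).card := by
        rw [Finset.mem_Icc] at hi
        rw [show (Finset.Icc 1 T.length).filter (· ≤ i) = Finset.Icc 1 i by ext; simp; omega]
        simp
    _ = _ := by
      refine card_filter_le_eq_card_filter_key_le (fun a ha => ?_) (fun j hj => ?_)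
        (fun a ha b hb => hmono.le_iff_le (by simpa using ha) (by simpa using hb)) hi
      · simp only [Finset.coe_Icc, Set.mem_Icc] at ha ⊢
        exact hSAmem a ha.1 ha.2
      · simp only [Finset.coe_Icc, Set.mem_Icc] at hj
        obtain ⟨a, ha, han, rfl⟩ := hSAsurj j hj.1 hj.2
        exact ⟨a, by simp [ha, han], rfl⟩

theorem eq_rangeBeg_add_card_of_sorted {SA : ℕ → ℕ}
    (hSAmem : ∀ i, 1 ≤ i → i ≤ T.length → 1 ≤ SA i ∧ SA i ≤ T.length)
    (hSAsurj : ∀ j, 1 ≤ j → j ≤ T.length → ∃ i, 1 ≤ i ∧ i ≤ T.length ∧ SA i = j)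
    (hSAsorted : ∀ i i', 1 ≤ i → i < i' → i' ≤ T.length → suf T (SA i) < suf T (SA i'))
    {i : ℕ} (hi : i ∈ Finset.Icc 1 T.length) {X : List ℕ} (hX : X <+: suf T (SA i)) :
    i = RangeBeg X T + ((occs X T).filter fun j => suf T j ≤ suf T (SA i)).card := by
  rw [RangeBeg, ncard_setOf_Icc_and, occs, Finset.filter_filter]
  convert eq_card_filter_suf_le_of_sorted hSAmem hSAsurj hSAsorted hi using 1
  convert (card_filter_le_eq_add_of_isPrefix (Finset.Icc 1 T.length) (suf T) hX).symm

theorem card_filter_le_eq_card_occs_le {slex : ℕ → ℕ} {n' : ℕ} {Sync : Set ℕ}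
    (hslexSurj : ∀ x ∈ Sync, ∃ i, 1 ≤ i ∧ i ≤ n' ∧ slex i = x)
    (hslexSorted : ∀ i i', 1 ≤ i → i < i' → i' ≤ n' → suf T (slex i) < suf T (slex i'))
    {X : List ℕ} {d : ℕ} (hd : d ≤ X.length) (hsync : ∀ j ∈ occs X T, j + d ∈ Sync) {y : ℕ}
    (hy : y ∈ (Finset.Icc 1 n').filter fun a => d < slex a ∧ slex a - d ∈ occs X T) :
    (((Finset.Icc 1 n').filter fun a => d < slex a ∧ slex a - d ∈ occs X T).filter
        (· ≤ y)).card =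
      ((occs X T).filter fun j => suf T j ≤ suf T (slex y - d)).card := by
  have hmono : StrictMonoOn (fun a => suf T (slex a)) (Set.Icc 1 n') :=
    fun a ha b hb hab => hslexSorted a b ha.1 hab hb.2
  refine card_filter_le_eq_card_filter_key_le (key := suf T) (g := fun a => slex a - d)
    (fun a ha => ?_) (fun j hj => ?_) (fun a ha b hb => ?_) hy
  · simp only [Finset.coe_filter, Set.mem_ofPred_eq] at ha
    exact ha.2.2
  · obtain ⟨a, ha, han, hj'⟩ := hslexSurj _ (hsync j hj)
    have hj1 : 1 ≤ j := (coe_occs_subset_Icc X T hj).1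
    refine ⟨a, ?_, by simp only; omega⟩
    simp only [Finset.coe_filter, Finset.mem_Icc, Set.mem_ofPred_eq]
    exact ⟨⟨ha, han⟩, by omega, by rwa [hj', Nat.add_sub_cancel]⟩
  · simp only [occs, Finset.mem_filter, Finset.mem_Icc] at ha hb
    rw [← suf_le_suf_iff_of_isPrefix T ha.2.2.1.1 hb.2.2.1.1 ha.2.2.2 hb.2.2.2 hd,
      Nat.sub_add_cancel ha.2.1.le, Nat.sub_add_cancel hb.2.1.le]
    exact hmono.le_iff_le ha.1 hb.1

end SuffixRanks

theorem statement_8_general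
    (n τ : ℕ) (T : List ℕ)
    (hlen : T.length = n)
    (hlast : idx T n = 0) (huniq : ∀ i, 1 ≤ i → i < n → idx T i ≠ 0)
    (Sync : Set ℕ)
    (hSyncRange : ∀ i ∈ Sync, 1 ≤ i ∧ i + 2 * τ ≤ n + 1)
    (hCons : ∀ i j : ℕ, 1 ≤ i → i + 2 * τ ≤ n + 1 → 1 ≤ j → j + 2 * τ ≤ n + 1 →
      sub T i (i + 2 * τ) = sub T j (j + 2 * τ) → (i ∈ Sync ↔ j ∈ Sync))
    (hDens : ∀ i : ℕ, 1 ≤ i → i + 3 * τ ≤ n + 2 →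
      (Sync ∩ Set.Ico i (i + τ) = ∅ ↔ i ∈ R T τ))
    (n' : ℕ)
    (slex : ℕ → ℕ)
    (hslexMem : ∀ i, 1 ≤ i → i ≤ n' → slex i ∈ Sync)
    (hslexSurj : ∀ x ∈ Sync, ∃ i, 1 ≤ i ∧ i ≤ n' ∧ slex i = x)
    (hslexSorted : ∀ i i', 1 ≤ i → i < i' → i' ≤ n' → suf T (slex i) < suf T (slex i'))
    (SA : ℕ → ℕ)
    (hSAmem : ∀ i, 1 ≤ i → i ≤ n → 1 ≤ SA i ∧ SA i ≤ n)
    (hSAsurj : ∀ j, 1 ≤ j → j ≤ n → ∃ i, 1 ≤ i ∧ i ≤ n ∧ SA i = j)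
    (hSAsorted : ∀ i i', 1 ≤ i → i < i' → i' ≤ n → suf T (SA i) < suf T (SA i'))
    (i : ℕ) (hi1 : 1 ≤ i) (hi2 : i ≤ n)
    (X : List ℕ) (hX : X ∈ Dset T τ Sync) (hXpref : X <+: suf T (SA i))
    (δ : ℕ → ℕ)
    (hδ : ∀ j, δ j = Set.ncard {j' | 1 ≤ j' ∧ j' ≤ n ∧ X.length ≤ LCE T j j' ∧
      suf T j' ≤ suf T j})
    (Wset : Set ℕ)
    (hWset : Wset = {i' | 1 ≤ i' ∧ i' ≤ n' ∧ X.reverse <+: Wstr T τ slex i'}) :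
    i = RangeBeg X T + δ (SA i) ∧
    (∀ y, y ∈ Wset → (Wset ∩ Set.Iic y).ncard = i - RangeBeg X T →
      slex y = SA i + (X.length - 2 * τ)) := by
  subst hlen
  obtain ⟨i₀, d, hi₀, hdτ, hXd, hsync₀⟩ :=
    exists_sync_offset_of_mem_Dset (fun j hj => (hSyncRange j hj).2) hDens hX
  have hsync : ∀ j ∈ occs X T, j + d ∈ Sync := fun j hj =>
    add_mem_of_mem_occs hCons hXd.ge hi₀ hsync₀ hj
  have hX0 : 0 ∉ X.take d :=
    zero_notMem_take huniq (by omega) hi₀ (by have := hSyncRange _ hsync₀; omega)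
  have hSAi : SA i ∈ occs X T := by simp [occs, hSAmem i hi1 hi2, hXpref]
  have hδi : δ (SA i) = _ := (hδ _).trans (ncard_length_le_LCE_eq_card_occs hXpref)
  have hpart1 : i = RangeBeg X T + δ (SA i) := hδi ▸ eq_rangeBeg_add_card_of_sorted hSAmem
    hSAsurj hSAsorted (Finset.mem_Icc.mpr ⟨hi1, hi2⟩) hXpref
  refine ⟨hpart1, fun y hy hrank => ?_⟩
  rw [hWset, setOf_reverse_isPrefix_Wstr_eq hlast hSyncRange hslexMem hXd hdτ hX0] at hy hrank
  set s := (Finset.Icc 1 n').filter fun a => d < slex a ∧ slex a - d ∈ occs X T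
  rw [Finset.mem_coe] at hy
  rw [show (s : Set ℕ) ∩ Set.Iic y = ↑(s.filter (· ≤ y)) by ext; simp, Set.ncard_coe_finset,
    card_filter_le_eq_card_occs_le hslexSurj hslexSorted (by omega) hsync hy] at hrank
  obtain ⟨hdy, hy⟩ := (Finset.mem_filter.mp hy).2
  have hslexy : slex y - d = SA i :=
    eq_of_card_filter_key_le_eq ((suf_injOn T).mono (coe_occs_subset_Icc X T)) hy hSAi (by omega)
  omega

/-- Lemma: SA query for a nonperiodic position. -/
theorem statement_8
    (σ n τ : ℕ) (T : List ℕ)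
    (hσ : 2 ≤ σ) (hn : 2 ≤ n) (hτ : 1 ≤ τ)
    (hlen : T.length = n) (halph : ∀ c ∈ T, c < σ)
    (hlast : idx T n = 0) (huniq : ∀ i, 1 ≤ i → i < n → idx T i ≠ 0)
    (Sync : Set ℕ)
    (hSyncRange : ∀ i ∈ Sync, 1 ≤ i ∧ i + 2 * τ ≤ n + 1)
    (hCons : ∀ i j : ℕ, 1 ≤ i → i + 2 * τ ≤ n + 1 → 1 ≤ j → j + 2 * τ ≤ n + 1 →
      sub T i (i + 2 * τ) = sub T j (j + 2 * τ) → (i ∈ Sync ↔ j ∈ Sync))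
    (hDens : ∀ i : ℕ, 1 ≤ i → i + 3 * τ ≤ n + 2 →
      (Sync ∩ Set.Ico i (i + τ) = ∅ ↔ i ∈ R T τ))
    (n' : ℕ) (hn' : Sync.ncard = n')
    (slex : ℕ → ℕ)
    (hslexMem : ∀ i, 1 ≤ i → i ≤ n' → slex i ∈ Sync)
    (hslexSurj : ∀ x ∈ Sync, ∃ i, 1 ≤ i ∧ i ≤ n' ∧ slex i = x)
    (hslexSorted : ∀ i i', 1 ≤ i → i < i' → i' ≤ n' → suf T (slex i) < suf T (slex i'))
    (SA : ℕ → ℕ)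
    (hSAmem : ∀ i, 1 ≤ i → i ≤ n → 1 ≤ SA i ∧ SA i ≤ n)
    (hSAsurj : ∀ j, 1 ≤ j → j ≤ n → ∃ i, 1 ≤ i ∧ i ≤ n ∧ SA i = j)
    (hSAsorted : ∀ i i', 1 ≤ i → i < i' → i' ≤ n → suf T (SA i) < suf T (SA i'))
    (i : ℕ) (hi1 : 1 ≤ i) (hi2 : i ≤ n)
    (hSA1 : 1 ≤ SA i) (hSA2 : SA i + 3 * τ ≤ n + 2) (hSAR : SA i ∉ R T τ)
    (X : List ℕ) (hX : X ∈ Dset T τ Sync) (hXpref : X <+: suf T (SA i))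
    (δ : ℕ → ℕ)
    (hδ : ∀ j, δ j = Set.ncard {j' | 1 ≤ j' ∧ j' ≤ n ∧ X.length ≤ LCE T j j' ∧
      suf T j' ≤ suf T j})
    (Wset : Set ℕ)
    (hWset : Wset = {i' | 1 ≤ i' ∧ i' ≤ n' ∧ X.reverse <+: Wstr T τ slex i'}) :
    i = RangeBeg X T + δ (SA i) ∧
    (∀ y, y ∈ Wset → (Wset ∩ Set.Iic y).ncard = i - RangeBeg X T →
      slex y = SA i + (X.length - 2 * τ)) :=
  statement_8_general n τ T hlen hlast huniq Sync hSyncRange hCons hDens n' slex hslexMem hslexSurj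
    hslexSorted SA hSAmem hSAsurj hSAsorted i hi1 hi2 X hX hXpref δ hδ Wset hWset

end CSA
end
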